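/- Conversely, any matrix A ∈ ℝ^{n×n} (n = N m) whose reshaped slices A_{:,j,k,:} ∈ ℝ^{m×m} all have rank at most 1 can be written as a Monarch matrix M = P₁ L P₂ R with N square blocks. -/

import Mathlib

/-!
Entrywise, `(P₁ L P₂ R)_{(l,j),(k,i)} = L_j(l,k) · R_k(j,i)`: the shuffles make the product of
the two block-diagonal factors pass through the single intermediate index `(k, j)`. So a Monarch
factorization of `A` amounts to writing every slice as an outer product
`A_{:,j,k,:} = u_{jk} v_{jk}ᵀ`, taking `L_j(l,k) = u_{jk}(l)` and `R_k(j,i) = v_{jk}(i)`.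
-/

open Matrix

/-- The perfect-shuffle permutation matrix on `Fin m × Fin m`. -/
def shuffle (m : ℕ) : Matrix (Fin m × Fin m) (Fin m × Fin m) ℝ :=
  Matrix.of fun a b => if a = b.swap then 1 else 0

/-- Block-diagonal matrix on `Fin m × Fin m` with block index in the first coordinate. -/
def BD {m : ℕ} (L : Fin m → Matrix (Fin m) (Fin m) ℝ) :
    Matrix (Fin m × Fin m) (Fin m × Fin m) ℝ :=
  Matrix.of fun a b => if a.1 = b.1 then L a.1 a.2 b.2 else 0

theorem Matrix.exists_eq_vecMulVec_of_rank_le_one {K m n : Type*} [Field K] [Fintype n]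
    {M : Matrix m n K} (hM : M.rank ≤ 1) : ∃ u : m → K, ∃ v : n → K, M = vecMulVec u v := by
  classical
  obtain ⟨u, hu⟩ := (Submodule.finrank_le_one_iff_isPrincipal _).mp hM
  have hcol (i : n) : ∃ c : K, c • u = M.col i := by
    rw [← Submodule.mem_span_singleton, ← hu, ← M.mulVec_single_one]
    exact LinearMap.mem_range_self M.mulVecLin _
  choose v hv using hcol
  refine ⟨u, v, ext fun l i => ?_⟩
  rw [vecMulVec_apply, mul_comm, ← smul_eq_mul, ← Pi.smul_apply, hv]
  rfl

section Monarch

variable {m : ℕ}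

theorem shuffle_mul_apply {α : Type*} (M : Matrix (Fin m × Fin m) α ℝ) (a : Fin m × Fin m)
    (b : α) : (shuffle m * M) a b = M a.swap b := by
  simp [shuffle, mul_apply, eq_comm (a := a), Prod.swap_eq_iff_eq_swap]

theorem mul_shuffle_apply {α : Type*} (M : Matrix α (Fin m × Fin m) ℝ) (a : α)
    (b : Fin m × Fin m) : (M * shuffle m) a b = M a b.swap := by
  simp [shuffle, mul_apply, mul_ite]

theorem mul_BD_apply {α : Type*} (M : Matrix α (Fin m × Fin m) ℝ)
    (R : Fin m → Matrix (Fin m) (Fin m) ℝ) (a : α) (k i : Fin m) :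
    (M * BD R) a (k, i) = ∑ c, M a (k, c) * R k c i := by
  simp [BD, mul_apply, Fintype.sum_prod_type, mul_ite, Finset.sum_ite_eq']

theorem shuffle_mul_BD_mul_shuffle_mul_BD_apply (L R : Fin m → Matrix (Fin m) (Fin m) ℝ)
    (l j k i : Fin m) :
    (shuffle m * BD L * shuffle m * BD R) (l, j) (k, i) = L j l k * R k j i := by
  rw [mul_BD_apply]
  simp [mul_shuffle_apply, shuffle_mul_apply, BD]

end Monarch

/-- Monarch structure theorem (converse direction): any matrix whose reshaped slices
`A_{:,j,k,:}` all have rank at most 1 can be written as a Monarch matrix `P₁ L P₂ R`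
with square block-diagonal factors. -/
theorem rank_one_slices_is_monarch (m : ℕ)
    (A : Matrix (Fin m × Fin m) (Fin m × Fin m) ℝ)
    (h : ∀ j k : Fin m,
      (Matrix.of fun l i : Fin m => A (l, j) (k, i)).rank ≤ 1) :
    ∃ L R : Fin m → Matrix (Fin m) (Fin m) ℝ,
      A = shuffle m * BD L * shuffle m * BD R := by
  choose u v huv using fun j k => exists_eq_vecMulVec_of_rank_le_one (h j k)
  refine ⟨fun j => of fun l k => u j k l, fun k => of fun j i => v j k i, ?_⟩
  ext ⟨l, j⟩ ⟨k, i⟩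
  rw [shuffle_mul_BD_mul_shuffle_mul_BD_apply]
  exact congrFun₂ (huv j k) l i
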